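/- For every m ≥ 2, the three side midpoints p_1=(u_1+u_2)/2, p_2=(u_1+u_3)/2, p_3=(u_2+u_3)/2 are non-corner vertices of SG_m, and the Laplacian of the distance-to-corners function at each of them equals Δ_m d_m(p_i) = 2 for i ∈ {1,2,3}. -/

import Mathlib

open scoped Classical BigOperators ENNReal

noncomputable section

/-- Points of the plane. -/
abbrev Pt : Type := ℝ × ℝ

/-- Bottom-left corner `A`. -/
def u1 : Pt := (0, 0)
/-- Top corner `C`. -/
def u2 : Pt := (1/2, Real.sqrt 3 / 2)
/-- Bottom-right corner `B`. -/
def u3 : Pt := (1, 0)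

/-- The three corners of the gasket. -/
def corners : Set Pt := {u1, u2, u3}

/-- Vertex set of the `n`-th Sierpinski gasket approximation graph `SG_n`. -/
def V : ℕ → Set Pt
  | 0 => {u1, u2, u3}
  | n + 1 =>
      (fun p : Pt => (2:ℝ)⁻¹ • p) ''
        (V n ∪ (fun p => u2 + p) '' V n ∪ (fun p => u3 + p) '' V n)

/-- Edge set (as ordered pairs) of `SG_n`. -/
def Ed : ℕ → Set (Pt × Pt)
  | 0 => {(u1, u2), (u2, u3), (u1, u3)}
  | n + 1 =>
      (fun q : Pt × Pt => ((2:ℝ)⁻¹ • q.1, (2:ℝ)⁻¹ • q.2)) ''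
        (Ed n ∪ (fun q : Pt × Pt => (u2 + q.1, u2 + q.2)) '' Ed n ∪
          (fun q : Pt × Pt => (u3 + q.1, u3 + q.2)) '' Ed n)

/-- The `n`-th Sierpinski gasket approximation graph, as a simple graph on the plane
(vertices outside `V n` are isolated). -/
def SG (n : ℕ) : SimpleGraph Pt where
  Adj x y := ((x, y) ∈ Ed n ∨ (y, x) ∈ Ed n) ∧ x ≠ y
  symm := ⟨fun x y h => ⟨h.1.symm, h.2.symm⟩⟩
  loopless := ⟨fun _ h => h.2 rfl⟩

/-- Graph distance on `SG_n`. -/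
def gdist (n : ℕ) (x y : Pt) : ℕ := (SG n).dist x y

/-- `d_n x`: graph distance from `x` to the nearest corner of `SG_n`. -/
def dcorner (n : ℕ) (x : Pt) : ℕ :=
  min (gdist n x u1) (min (gdist n x u2) (gdist n x u3))

/-- Graph Laplacian of `SG_n` at a (non-corner, degree 4) vertex `x`:
`Δ_n f x = 4 f x - ∑_{y ∼ x} f y`. -/
def lap (n : ℕ) (f : Pt → ℝ) (x : Pt) : ℝ :=
  4 * f x - ∑ᶠ (y : Pt) (_ : (SG n).Adj x y), f y

/-- `g : Pt → Pt → ℝ` is the Green function of `SG_n` (stopped at the corners):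
it vanishes whenever one argument is a corner, and for every non-corner vertex `y`
the function `x ↦ g x y` has Laplacian `δ_y` at every non-corner vertex `x`. -/
def IsGreen (n : ℕ) (g : Pt → Pt → ℝ) : Prop :=
  (∀ x y : Pt, x ∈ corners ∨ y ∈ corners → g x y = 0) ∧
    ∀ y ∈ V n, y ∉ corners → ∀ x ∈ V n, x ∉ corners →
      lap n (fun z => g z y) x = if x = y then 1 else 0

/-- `h_n x = ∑_{y ∈ V_{SG_n}} g_n(x,y)`. -/
def hfun (n : ℕ) (g : Pt → Pt → ℝ) (x : Pt) : ℝ := ∑ᶠ y ∈ V n, g x y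

/-- Green convolution `(g_n * σ)(x) = ∑_{y ∈ V_{SG_n}} g_n(x,y) σ(y)`. -/
def conv (n : ℕ) (g : Pt → Pt → ℝ) (σ : Pt → ℕ) (x : Pt) : ℝ :=
  ∑ᶠ y ∈ V n, g x y * (σ y : ℝ)

/-- Midpoint of side `AB`. -/
def mAB : Pt := (2:ℝ)⁻¹ • (u1 + u3)
/-- Midpoint of side `BC`. -/
def mBC : Pt := (2:ℝ)⁻¹ • (u3 + u2)
/-- Midpoint of side `CA`. -/
def mCA : Pt := (2:ℝ)⁻¹ • (u2 + u1)

/-- The recursively defined sandpile configurations `M_n(a,b,c)` on `SG_n`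
(value `0` off the vertex set, and junk at level `0`). -/
def M : ℕ → ℕ → ℕ → ℕ → Pt → ℕ
  | 0, _, _, _, _ => 0
  | 1, a, b, c, x =>
      if x = u1 then a else if x = u3 then b else if x = u2 then c
      else if x = mAB then 3 else if x = mBC then 2 else if x = mCA then 3 else 0
  | n + 2, a, b, c, x =>
      if x = u1 then a else if x = u3 then b else if x = u2 then c
      else if x = mAB then 3 else if x = mBC then 2 else if x = mCA then 3
      else if (2:ℝ) • x ∈ V (n+1) then M (n+1) a 3 3 ((2:ℝ) • x)
      else if (2:ℝ) • x - u3 ∈ V (n+1) then M (n+1) 3 b 2 ((2:ℝ) • x - u3)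
      else if (2:ℝ) • x - u2 ∈ V (n+1) then M (n+1) 3 2 c ((2:ℝ) • x - u2)
      else 0

/-- Centroid of the three corners. -/
def ctr : Pt := (3:ℝ)⁻¹ • (u1 + u2 + u3)

/-- Rotation of the plane by 120° counterclockwise about the centroid. -/
def rotccw (x : Pt) : Pt :=
  (ctr.1 - (x.1 - ctr.1) / 2 - Real.sqrt 3 / 2 * (x.2 - ctr.2),
   ctr.2 + Real.sqrt 3 / 2 * (x.1 - ctr.1) - (x.2 - ctr.2) / 2)

/-- Rotation of the plane by 120° clockwise about the centroid. -/
def rotcw (x : Pt) : Pt :=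
  (ctr.1 - (x.1 - ctr.1) / 2 + Real.sqrt 3 / 2 * (x.2 - ctr.2),
   ctr.2 - Real.sqrt 3 / 2 * (x.1 - ctr.1) - (x.2 - ctr.2) / 2)

/-- The sandpile identity `id_n` on `SG_n` for `n ≥ 2` (junk `0` for `n ≤ 1` and off the
vertex set): value `2` at the corners and side midpoints, the configuration `M_{n-1}(2,2,2)`
rescaled on the bottom-left copy, its clockwise 120° rotation on the top copy, and its
counterclockwise 120° rotation on the bottom-right copy. -/
def sandId : ℕ → Pt → ℕ
  | 0, _ => 0
  | 1, _ => 0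
  | m + 2, x =>
      if x = u1 ∨ x = u2 ∨ x = u3 ∨ x = mAB ∨ x = mBC ∨ x = mCA then 2
      else if (2:ℝ) • x ∈ V (m+1) then M (m+1) 2 2 2 ((2:ℝ) • x)
      else if (2:ℝ) • x - u2 ∈ V (m+1) then M (m+1) 2 2 2 (rotccw ((2:ℝ) • x - u2))
      else if (2:ℝ) • x - u3 ∈ V (m+1) then M (m+1) 2 2 2 (rotcw ((2:ℝ) • x - u3))
      else 0

/-- `V_* = ⋃_n V_{SG_n}`. -/
def Vstar : Set Pt := ⋃ n, V n

/-- The Sierpinski gasket: the closure of `V_*` in the plane. -/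
def SGset : Set Pt := closure Vstar

/-- Euclidean distance on the plane. -/
def eud (x y : Pt) : ℝ := Real.sqrt ((x.1 - y.1) ^ 2 + (x.2 - y.2) ^ 2)

/-- The point of `V n` nearest to `x` in Euclidean distance, ties resolved by taking the
rightmost (largest first coordinate) minimizer. -/
def nearest (n : ℕ) (x : Pt) : Pt :=
  if h : ∃ y ∈ V n, (∀ z ∈ V n, eud x y ≤ eud x z) ∧
      ∀ z ∈ V n, eud x z = eud x y → z.1 ≤ y.1
  then h.choose else x

/-- Piecewise constant continuation `f^▲` of a function on `V n` to the gasket. -/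
def ext (n : ℕ) (f : Pt → ℝ) (x : Pt) : ℝ := f (nearest n x)

/-- Arc length (total variation w.r.t. the Euclidean distance) of a curve
`γ : [0,1] → ℝ²`. -/
def pathLen (γ : ℝ → Pt) : ℝ≥0∞ :=
  ⨆ p : ℕ × {u : ℕ → ℝ // Monotone u ∧ ∀ i, u i ∈ Set.Icc (0:ℝ) 1},
    ∑ i ∈ Finset.range p.1, ENNReal.ofReal (eud (γ (p.2.1 (i + 1))) (γ (p.2.1 i)))

/-- Intrinsic (shortest-path) distance between `x` and `y` through the gasket. -/
def intrinsicD (x y : Pt) : ℝ≥0∞ :=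
  ⨅ (γ : ℝ → Pt) (_ : ContinuousOn γ (Set.Icc 0 1)) (_ : γ 0 = x) (_ : γ 1 = y)
    (_ : Set.MapsTo γ (Set.Icc 0 1) SGset), pathLen γ

/-- `d(x)`: intrinsic shortest-path distance in the gasket from `x` to the nearest corner. -/
def dSG (x : Pt) : ℝ :=
  (min (intrinsicD x u1) (min (intrinsicD x u2) (intrinsicD x u3))).toReal

/-!
`SG (k + 1)` consists of three half-size copies of `SG k`, the copy at corner `i` being the image
of the contraction `midpoint ℝ (corner i)`. The midpoint of the side from corner `i` to corner `j`
is the image of corner `j` in copy `i` and of corner `i` in copy `j`, so its four neighbours are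
the images of the two neighbours of a corner of `SG k` in both copies.

Along an edge of `SG n` every barycentric coordinate changes by at most `2⁻¹ ^ n`, so the graph
distance from `x` to corner `l` is at least `2 ^ n` times one minus the `l`-th coordinate of `x`;
explicit walks along the sides attain this bound at the points involved. Hence `d_{k+1}` equals
`2 ^ k` at the midpoint and `2 ^ k - 1, 2 ^ k, 2 ^ k - 1, 2 ^ k` at its neighbours, and the
Laplacian is `4 · 2 ^ k - (4 · 2 ^ k - 2) = 2`.
-/

open SimpleGraph AffineMap

lemma AffineBasis.coord_le_one {ι V P : Type*} [Fintype ι] [AddCommGroup V] [Module ℝ V]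
    [AddTorsor V P] (b : AffineBasis ι ℝ P) {x : P} (hx : ∀ l, 0 ≤ b.coord l x) (i : ι) :
    b.coord i x ≤ 1 :=
  (Finset.single_le_sum (fun l _ => hx l) (Finset.mem_univ i)).trans_eq (b.sum_coord_apply_eq_one x)

lemma AffineBasis.eq_of_coord_eq_one {ι V P : Type*} [Fintype ι] [DecidableEq ι]
    [AddCommGroup V] [Module ℝ V] [AddTorsor V P] (b : AffineBasis ι ℝ P) {x : P}
    (hx : ∀ l, 0 ≤ b.coord l x) {i : ι} (hi : b.coord i x = 1) : x = b i := by
  refine b.ext_elem fun l => ?_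
  rw [b.coord_apply]
  split_ifs with hl
  · rw [hl, hi]
  · have := Finset.add_le_sum (fun l _ => hx l) (Finset.mem_univ i) (Finset.mem_univ l) (Ne.symm hl)
    rw [b.sum_coord_apply_eq_one, hi] at this
    linarith [hx l]

lemma two_inv_smul_add {E : Type*} [AddCommGroup E] [Module ℝ E] (x y : E) :
    (2:ℝ)⁻¹ • (x + y) = midpoint ℝ x y := by
  rw [midpoint_eq_smul_add, invOf_eq_inv]

lemma midpoint_right_injective {E : Type*} [AddCommGroup E] [Module ℝ E] (c : E) :
    Function.Injective (midpoint ℝ c) := fun a b h => by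
  simpa [← two_inv_smul_add] using h

lemma SimpleGraph.Hom.edist_apply_le {V W : Type*} {G : SimpleGraph V} {H : SimpleGraph W}
    (f : G →g H) (u v : V) : H.edist (f u) (f v) ≤ G.edist u v := by
  by_cases huv : G.Reachable u v
  · obtain ⟨w, hw⟩ := huv.exists_walk_length_eq_edist
    rw [← hw, ← w.length_map f]
    exact edist_le _
  · rw [edist_eq_top_of_not_reachable huv]
    exact le_top

namespace SierpinskiGasket

def corner : Fin 3 → Pt := ![u1, u2, u3]

lemma mem_corners_iff {x : Pt} : x ∈ corners ↔ ∃ i, x = corner i := by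
  simp [corners, corner, Fin.exists_fin_succ]

lemma affineIndependent_corner : AffineIndependent ℝ corner := by
  let axis : AffineSubspace ℝ Pt := (LinearMap.ker (LinearMap.snd ℝ ℝ ℝ)).toAffineSubspace
  refine affineIndependent_of_ne_of_mem_of_notMem_of_mem (s := axis) ?_ ?_ ?_ ?_
  · simp [u1, u3]
  · simp [axis, u1]
  · simp [axis, u2]
  · simp [axis, u3]

lemma corner_injective : Function.Injective corner := affineIndependent_corner.injective

def baryBasis : AffineBasis (Fin 3) ℝ Pt :=
  ⟨corner, affineIndependent_corner,
    affineIndependent_corner.affineSpan_eq_top_iff_card_eq_finrank_add_one.mpr (by simp)⟩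

local notation "β" => baryBasis.coord

lemma coord_corner (l i : Fin 3) : β l (corner i) = if l = i then 1 else 0 :=
  baryBasis.coord_apply l i

lemma coord_corner_nonneg (l i : Fin 3) : 0 ≤ β l (corner i) := by
  rw [coord_corner]; split_ifs <;> norm_num

lemma coord_midpoint (l : Fin 3) (x y : Pt) :
    β l (midpoint ℝ x y) = (β l x + β l y) / 2 := by
  rw [AffineMap.map_midpoint, midpoint_eq_smul_add, smul_eq_mul, invOf_eq_inv]; ring

lemma eq_of_midpoint_corner_eq_corner {a : Pt} (ha : ∀ l, 0 ≤ β l a) {l i : Fin 3}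
    (h : midpoint ℝ (corner l) a = corner i) : l = i ∧ a = corner i := by
  have hcoord := congrArg (β i) h
  rw [coord_midpoint, coord_corner, coord_corner, if_pos rfl] at hcoord
  have hli : l = i := by
    by_contra hne
    rw [if_neg (Ne.symm hne)] at hcoord
    linarith [baryBasis.coord_le_one ha i]
  subst hli
  rw [if_pos rfl] at hcoord
  exact ⟨rfl, baryBasis.eq_of_coord_eq_one ha (by linarith)⟩

lemma eq_of_midpoint_corner_eq_midpoint_corner {a : Pt} (ha : ∀ l, 0 ≤ β l a) {i j l : Fin 3}
    (hij : i ≠ j) (h : midpoint ℝ (corner l) a = midpoint ℝ (corner i) (corner j)) :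
    (l = i ∧ a = corner j) ∨ (l = j ∧ a = corner i) := by
  by_cases hli : l = i
  · subst hli
    exact Or.inl ⟨rfl, midpoint_right_injective _ h⟩
  by_cases hlj : l = j
  · subst hlj
    exact Or.inr ⟨rfl, midpoint_right_injective _ (h.trans (midpoint_comm _ _))⟩
  have hcoord := congrArg (β l) h
  simp only [coord_midpoint, coord_corner, if_pos, if_neg hli, if_neg hlj] at hcoord
  linarith [ha l]

lemma midpoint_corner_notMem_corners {i j : Fin 3} (hij : i ≠ j) :
    midpoint ℝ (corner i) (corner j) ∉ corners := by
  intro hmem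
  obtain ⟨l, hl⟩ := mem_corners_iff.1 hmem
  have hcoord := congrArg (β l) hl
  simp only [coord_midpoint, coord_corner, if_pos] at hcoord
  split_ifs at hcoord with hli hlj hlj <;> first | exact hij (hli ▸ hlj) | norm_num at hcoord

lemma two_inv_smul (x : Pt) : (2:ℝ)⁻¹ • x = midpoint ℝ (corner 0) x := by
  rw [← two_inv_smul_add]; simp [corner, u1]

lemma midpoint_corner_mem_V {n : ℕ} {x : Pt} (l : Fin 3) (hx : x ∈ V n) :
    midpoint ℝ (corner l) x ∈ V (n + 1) := by
  fin_cases l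
  · exact ⟨x, Or.inl (Or.inl hx), two_inv_smul x⟩
  · exact ⟨u2 + x, Or.inl (Or.inr ⟨x, hx, rfl⟩), two_inv_smul_add _ _⟩
  · exact ⟨u3 + x, Or.inr ⟨x, hx, rfl⟩, two_inv_smul_add _ _⟩

lemma corner_mem_V (n : ℕ) (i : Fin 3) : corner i ∈ V n := by
  induction n with
  | zero => fin_cases i <;> simp [V, corner]
  | succ n ih => simpa using midpoint_corner_mem_V i ih

lemma mem_Ed_succ {n : ℕ} {x y : Pt} :
    (x, y) ∈ Ed (n + 1) ↔ ∃ l a b, (a, b) ∈ Ed n ∧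
      x = midpoint ℝ (corner l) a ∧ y = midpoint ℝ (corner l) b := by
  constructor
  · rintro ⟨q, (hq | ⟨r, hq, rfl⟩) | ⟨r, hq, rfl⟩, hxy⟩ <;> cases hxy
    · exact ⟨0, q.1, q.2, hq, two_inv_smul _, two_inv_smul _⟩
    · exact ⟨1, r.1, r.2, hq, two_inv_smul_add _ _, two_inv_smul_add _ _⟩
    · exact ⟨2, r.1, r.2, hq, two_inv_smul_add _ _, two_inv_smul_add _ _⟩
  · rintro ⟨l, a, b, hab, rfl, rfl⟩
    fin_cases l
    · exact ⟨(a, b), Or.inl (Or.inl hab), Prod.ext (two_inv_smul a) (two_inv_smul b)⟩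
    · exact ⟨(u2 + a, u2 + b), Or.inl (Or.inr ⟨(a, b), hab, rfl⟩),
        Prod.ext (two_inv_smul_add _ _) (two_inv_smul_add _ _)⟩
    · exact ⟨(u3 + a, u3 + b), Or.inr ⟨(a, b), hab, rfl⟩,
        Prod.ext (two_inv_smul_add _ _) (two_inv_smul_add _ _)⟩

lemma adj_zero_iff {x y : Pt} :
    (SG 0).Adj x y ↔ ∃ i j, i ≠ j ∧ x = corner i ∧ y = corner j := by
  constructor
  · rintro ⟨h | h, -⟩ <;> simp only [Ed, Set.mem_insert_iff, Set.mem_singleton_iff,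
      Prod.mk.injEq] at h <;> rcases h with ⟨rfl, rfl⟩ | ⟨rfl, rfl⟩ | ⟨rfl, rfl⟩
    exacts [⟨0, 1, by decide, rfl, rfl⟩, ⟨1, 2, by decide, rfl, rfl⟩, ⟨0, 2, by decide, rfl, rfl⟩,
      ⟨1, 0, by decide, rfl, rfl⟩, ⟨2, 1, by decide, rfl, rfl⟩, ⟨2, 0, by decide, rfl, rfl⟩]
  · rintro ⟨i, j, hij, rfl, rfl⟩
    refine ⟨?_, corner_injective.ne hij⟩
    fin_cases i <;> fin_cases j <;> simp_all [Ed, corner]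

lemma adj_succ_iff {n : ℕ} {x y : Pt} :
    (SG (n + 1)).Adj x y ↔ ∃ l a b, (SG n).Adj a b ∧
      x = midpoint ℝ (corner l) a ∧ y = midpoint ℝ (corner l) b := by
  constructor
  · rintro ⟨h | h, hxy⟩
    · obtain ⟨l, a, b, hab, rfl, rfl⟩ := mem_Ed_succ.1 h
      exact ⟨l, a, b, ⟨Or.inl hab, fun h => hxy (h ▸ rfl)⟩, rfl, rfl⟩
    · obtain ⟨l, b, a, hba, rfl, rfl⟩ := mem_Ed_succ.1 h
      exact ⟨l, a, b, ⟨Or.inr hba, fun h => hxy (h ▸ rfl)⟩, rfl, rfl⟩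
  · rintro ⟨l, a, b, ⟨hab | hba, hne⟩, rfl, rfl⟩
    · exact ⟨Or.inl (mem_Ed_succ.2 ⟨l, a, b, hab, rfl, rfl⟩), (midpoint_right_injective _).ne hne⟩
    · exact ⟨Or.inr (mem_Ed_succ.2 ⟨l, b, a, hba, rfl, rfl⟩), (midpoint_right_injective _).ne hne⟩

def midpointHom (n : ℕ) (l : Fin 3) : SG n →g SG (n + 1) where
  toFun := midpoint ℝ (corner l)
  map_rel' h := adj_succ_iff.2 ⟨l, _, _, h, rfl, rfl⟩

lemma edist_midpoint_le (n : ℕ) (l : Fin 3) (x y : Pt) :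
    (SG (n + 1)).edist (midpoint ℝ (corner l) x) (midpoint ℝ (corner l) y) ≤ (SG n).edist x y :=
  (midpointHom n l).edist_apply_le x y

lemma coord_nonneg_of_adj {n : ℕ} {x y : Pt} (h : (SG n).Adj x y) (l : Fin 3) : 0 ≤ β l x := by
  induction n generalizing x y with
  | zero =>
    obtain ⟨i, j, -, rfl, rfl⟩ := adj_zero_iff.1 h
    exact coord_corner_nonneg l i
  | succ n ih =>
    obtain ⟨p, a, b, hab, rfl, rfl⟩ := adj_succ_iff.1 h
    rw [coord_midpoint]
    linarith [coord_corner_nonneg l p, ih hab]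

lemma abs_coord_sub_le_of_adj {n : ℕ} {x y : Pt} (h : (SG n).Adj x y) (l : Fin 3) :
    |β l x - β l y| ≤ 2⁻¹ ^ n := by
  induction n generalizing x y with
  | zero =>
    obtain ⟨i, j, -, rfl, rfl⟩ := adj_zero_iff.1 h
    rw [coord_corner, coord_corner]
    split_ifs <;> norm_num
  | succ n ih =>
    obtain ⟨p, a, b, hab, rfl, rfl⟩ := adj_succ_iff.1 h
    have hdiff := abs_le.1 (ih hab)
    rw [coord_midpoint, coord_midpoint, pow_succ, abs_le]
    constructor <;> linarith [hdiff.1, hdiff.2]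

lemma abs_coord_sub_le_length {n : ℕ} {x y : Pt} (w : (SG n).Walk x y) (l : Fin 3) :
    |β l x - β l y| ≤ w.length * 2⁻¹ ^ n := by
  induction w with
  | nil => simp
  | cons h w ih =>
    rw [Walk.length_cons, Nat.cast_succ, add_mul, one_mul, add_comm]
    exact (abs_sub_le _ _ _).trans (add_le_add (abs_coord_sub_le_of_adj h l) ih)

lemma two_pow_mul_two_inv_pow (k : ℕ) : (2:ℝ) ^ k * 2⁻¹ ^ k = 1 := by
  rw [← mul_pow]; norm_num

lemma two_pow_mul_abs_coord_sub_le_dist {n : ℕ} {x y : Pt} (h : (SG n).Reachable x y)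
    (l : Fin 3) : 2 ^ n * |β l x - β l y| ≤ (SG n).dist x y := by
  obtain ⟨w, hw⟩ := h.exists_walk_length_eq_dist
  calc 2 ^ n * |β l x - β l y| ≤ 2 ^ n * (w.length * 2⁻¹ ^ n) := by
        gcongr; exact abs_coord_sub_le_length w l
    _ = (SG n).dist x y := by rw [hw, mul_left_comm, two_pow_mul_two_inv_pow, mul_one]

/-- The neighbour of `corner j` in `SG n` in the direction of `corner l`. -/
def cornerNbr (n : ℕ) (j l : Fin 3) : Pt := lineMap (corner j) (corner l) ((2:ℝ)⁻¹ ^ n)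

lemma cornerNbr_zero (j l : Fin 3) : cornerNbr 0 j l = corner l := by
  simp [cornerNbr]

lemma cornerNbr_self (n : ℕ) (j : Fin 3) : cornerNbr n j j = corner j := by
  simp [cornerNbr]

lemma midpoint_cornerNbr (n : ℕ) (j l : Fin 3) :
    midpoint ℝ (corner j) (cornerNbr n j l) = cornerNbr (n + 1) j l := by
  simp only [cornerNbr, midpoint_eq_smul_add, lineMap_apply_module, pow_succ, invOf_eq_inv]
  module

lemma coord_cornerNbr (n : ℕ) (p j l : Fin 3) :
    β p (cornerNbr n j l) = β p (corner j) + 2⁻¹ ^ n * (β p (corner l) - β p (corner j)) := by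
  rw [cornerNbr, apply_lineMap, lineMap_apply_ring']
  ring

lemma adj_cornerNbr {n : ℕ} {j l l' : Fin 3} (hl : l ≠ l') :
    (SG n).Adj (cornerNbr n j l) (cornerNbr n j l') := by
  induction n with
  | zero => exact adj_zero_iff.2 ⟨l, l', hl, cornerNbr_zero j l, cornerNbr_zero j l'⟩
  | succ n ih =>
    rw [← midpoint_cornerNbr, ← midpoint_cornerNbr]
    exact (midpointHom n j).map_adj ih

lemma exists_eq_cornerNbr_of_adj {n : ℕ} {j : Fin 3} {y : Pt} (h : (SG n).Adj (corner j) y) :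
    ∃ l ≠ j, y = cornerNbr n j l := by
  induction n generalizing y with
  | zero =>
    obtain ⟨i, l, hil, hi, rfl⟩ := adj_zero_iff.1 h
    cases corner_injective hi
    exact ⟨l, Ne.symm hil, (cornerNbr_zero j l).symm⟩
  | succ n ih =>
    obtain ⟨p, a, b, hab, hpa, rfl⟩ := adj_succ_iff.1 h
    obtain ⟨rfl, rfl⟩ := eq_of_midpoint_corner_eq_corner (coord_nonneg_of_adj hab) hpa.symm
    obtain ⟨l, hl, rfl⟩ := ih hab
    exact ⟨l, hl, midpoint_cornerNbr n p l⟩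

lemma adj_corner_iff {n : ℕ} {j : Fin 3} {y : Pt} :
    (SG n).Adj (corner j) y ↔ ∃ l ≠ j, y = cornerNbr n j l := by
  refine ⟨exists_eq_cornerNbr_of_adj, ?_⟩
  rintro ⟨l, hl, rfl⟩
  simpa [cornerNbr_self] using adj_cornerNbr (n := n) (j := j) (Ne.symm hl)

lemma edist_midpoint_corner_le (n : ℕ) (i : Fin 3) (z : Pt) :
    (SG (n + 1)).edist (midpoint ℝ (corner i) z) (corner i) ≤ (SG n).edist z (corner i) := by
  simpa only [midpoint_self] using edist_midpoint_le n i z (corner i)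

lemma edist_corner_le (n : ℕ) (i j : Fin 3) :
    (SG n).edist (corner i) (corner j) ≤ (2 ^ n : ℕ) := by
  induction n generalizing i j with
  | zero =>
    rcases eq_or_ne i j with rfl | hij
    · simp
    · exact edist_le_one_iff_adj_or_eq.2 (Or.inl (adj_zero_iff.2 ⟨i, j, hij, rfl, rfl⟩))
  | succ n ih =>
    have hj := edist_midpoint_corner_le n j (corner i)
    rw [midpoint_comm] at hj
    calc (SG (n + 1)).edist (corner i) (corner j)
        ≤ (SG (n + 1)).edist (midpoint ℝ (corner i) (corner j)) (corner i)
          + (SG (n + 1)).edist (midpoint ℝ (corner i) (corner j)) (corner j) := by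
          rw [SimpleGraph.edist_comm (u := midpoint ℝ (corner i) (corner j))]
          exact SimpleGraph.edist_triangle
      _ ≤ (2 ^ n : ℕ) + (2 ^ n : ℕ) :=
          add_le_add ((edist_midpoint_corner_le n i _).trans (ih j i)) (hj.trans (ih i j))
      _ = (2 ^ (n + 1) : ℕ) := by push_cast; ring

lemma edist_cornerNbr_corner_le (n : ℕ) (i j : Fin 3) :
    (SG n).edist (cornerNbr n j i) (corner i) ≤ (2 ^ n - 1 : ℕ) := by
  induction n with
  | zero => simp [cornerNbr_zero]
  | succ n ih =>
    have hi := edist_midpoint_corner_le n i (corner j)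
    rw [midpoint_comm] at hi
    calc (SG (n + 1)).edist (cornerNbr (n + 1) j i) (corner i)
        ≤ (SG (n + 1)).edist (midpoint ℝ (corner j) (cornerNbr n j i))
            (midpoint ℝ (corner j) (corner i))
          + (SG (n + 1)).edist (midpoint ℝ (corner j) (corner i)) (corner i) := by
          rw [← midpoint_cornerNbr]; exact SimpleGraph.edist_triangle
      _ ≤ (2 ^ n - 1 : ℕ) + (2 ^ n : ℕ) :=
          add_le_add ((edist_midpoint_le ..).trans ih) (hi.trans (edist_corner_le n j i))
      _ = (2 ^ (n + 1) - 1 : ℕ) := by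
          rw [← Nat.cast_add, pow_succ]
          congr 1
          have := Nat.one_le_two_pow (n := n)
          omega

lemma dcorner_eq_of_edist_le {n d : ℕ} {x : Pt} (i : Fin 3)
    (hup : (SG n).edist x (corner i) ≤ d) (hlow : ∀ l, (d : ℝ) ≤ 2 ^ n * (1 - β l x)) :
    dcorner n x = d := by
  have hreach : (SG n).Reachable x (corner i) :=
    reachable_of_edist_ne_top (ne_top_of_le_ne_top (ENat.natCast_ne_top d) hup)
  have hge (l : Fin 3) : d ≤ (SG n).dist x (corner l) := by
    have hxl : (SG n).Reachable x (corner l) := hreach.trans <| reachable_of_edist_ne_top <|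
      ne_top_of_le_ne_top (ENat.natCast_ne_top _) (edist_corner_le n i l)
    have hdist := two_pow_mul_abs_coord_sub_le_dist hxl l
    rw [coord_corner, if_pos rfl, abs_sub_comm] at hdist
    have : (d : ℝ) ≤ (SG n).dist x (corner l) :=
      calc (d : ℝ) ≤ 2 ^ n * (1 - β l x) := hlow l
        _ ≤ 2 ^ n * |1 - β l x| := by gcongr; exact le_abs_self _
        _ ≤ _ := hdist
    exact_mod_cast this
  have hle : (SG n).dist x (corner i) ≤ d := by
    rw [← Nat.cast_le (α := ℕ∞), hreach.coe_dist_eq_edist]; exact hup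
  have h0 := hge 0; have h1 := hge 1; have h2 := hge 2
  simp only [dcorner, gdist]
  fin_cases i <;> simp_all [corner] <;> omega

lemma dcorner_midpoint_corner {i j : Fin 3} (hij : i ≠ j) (k : ℕ) :
    dcorner (k + 1) (midpoint ℝ (corner i) (corner j)) = 2 ^ k := by
  refine dcorner_eq_of_edist_le i ?_ fun l => ?_
  · exact (edist_midpoint_corner_le ..).trans (edist_corner_le k j i)
  · have := pow_pos (two_pos : (0:ℝ) < 2) k
    rw [coord_midpoint, coord_corner, coord_corner, pow_succ]
    push_cast
    split_ifs with hli hlj hlj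
    · exact absurd (hli.symm.trans hlj) hij
    all_goals linarith

lemma dcorner_midpoint_cornerNbr_self {i j : Fin 3} (hij : i ≠ j) (k : ℕ) :
    dcorner (k + 1) (midpoint ℝ (corner i) (cornerNbr k j i)) = 2 ^ k - 1 := by
  refine dcorner_eq_of_edist_le i ?_ fun l => ?_
  · exact (edist_midpoint_corner_le ..).trans (edist_cornerNbr_corner_le k i j)
  · have := two_pow_mul_two_inv_pow k
    have : (0:ℝ) ≤ 2⁻¹ ^ k := by positivity
    rw [coord_midpoint, coord_cornerNbr, coord_corner, coord_corner, pow_succ,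
      Nat.cast_sub Nat.one_le_two_pow]
    push_cast
    split_ifs with hli hlj hlj
    · exact absurd (hli.symm.trans hlj) hij
    all_goals nlinarith

lemma dcorner_midpoint_cornerNbr_third {i j m : Fin 3} (hij : i ≠ j) (him : i ≠ m) (hjm : j ≠ m)
    (k : ℕ) : dcorner (k + 1) (midpoint ℝ (corner i) (cornerNbr k j m)) = 2 ^ k := by
  refine dcorner_eq_of_edist_le i ?_ fun l => ?_
  · calc (SG (k + 1)).edist (midpoint ℝ (corner i) (cornerNbr k j m)) (corner i)
        ≤ (SG k).edist (cornerNbr k j m) (cornerNbr k j i)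
          + (SG k).edist (cornerNbr k j i) (corner i) :=
          (edist_midpoint_corner_le ..).trans SimpleGraph.edist_triangle
      _ ≤ 1 + (2 ^ k - 1 : ℕ) :=
          add_le_add (edist_eq_one_iff_adj.2 (adj_cornerNbr him.symm)).le
            (edist_cornerNbr_corner_le k i j)
      _ = (2 ^ k : ℕ) := by
          rw [← Nat.cast_one, ← Nat.cast_add, Nat.add_sub_cancel' Nat.one_le_two_pow]
  · have := two_pow_mul_two_inv_pow k
    have : (2:ℝ)⁻¹ ^ k ≤ 1 := pow_le_one₀ (by norm_num) (by norm_num)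
    have : (1:ℝ) ≤ 2 ^ k := one_le_pow₀ (by norm_num)
    rw [coord_midpoint, coord_cornerNbr, coord_corner, coord_corner, coord_corner, pow_succ]
    push_cast
    split_ifs <;> subst_vars <;> first | contradiction | nlinarith

lemma adj_midpoint_corner_iff {i j m : Fin 3} (hij : i ≠ j) (him : i ≠ m) (hjm : j ≠ m) {n : ℕ}
    {y : Pt} : (SG (n + 1)).Adj (midpoint ℝ (corner i) (corner j)) y ↔
      y = midpoint ℝ (corner i) (cornerNbr n j i) ∨ y = midpoint ℝ (corner i) (cornerNbr n j m) ∨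
      y = midpoint ℝ (corner j) (cornerNbr n i j) ∨
      y = midpoint ℝ (corner j) (cornerNbr n i m) := by
  rw [adj_succ_iff]
  constructor
  · rintro ⟨l, a, b, hab, hmid, rfl⟩
    rcases eq_of_midpoint_corner_eq_midpoint_corner (coord_nonneg_of_adj hab) hij hmid.symm with
      ⟨hl, rfl⟩ | ⟨hl, rfl⟩ <;> subst l <;> obtain ⟨p, hp, rfl⟩ := adj_corner_iff.1 hab
    · obtain rfl | rfl : p = i ∨ p = m := by omega
      all_goals simp
    · obtain rfl | rfl : p = j ∨ p = m := by omega
      all_goals simp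
  · rintro (rfl | rfl | rfl | rfl)
    · exact ⟨i, corner j, _, adj_corner_iff.2 ⟨i, hij, rfl⟩, rfl, rfl⟩
    · exact ⟨i, corner j, _, adj_corner_iff.2 ⟨m, hjm.symm, rfl⟩, rfl, rfl⟩
    · exact ⟨j, corner i, _, adj_corner_iff.2 ⟨j, hij.symm, rfl⟩, midpoint_comm .., rfl⟩
    · exact ⟨j, corner i, _, adj_corner_iff.2 ⟨m, him.symm, rfl⟩, midpoint_comm .., rfl⟩

lemma lap_eq_of_adj_iff {n : ℕ} {x : Pt} (s : Finset Pt) (hs : ∀ y, (SG n).Adj x y ↔ y ∈ s)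
    (f : Pt → ℝ) : lap n f x = 4 * f x - ∑ y ∈ s, f y := by
  rw [lap, ← finsum_mem_coe_finset]
  simp only [hs, Finset.mem_coe]

theorem lap_dcorner_midpoint_corner {i j m : Fin 3} (hij : i ≠ j) (him : i ≠ m) (hjm : j ≠ m)
    (k : ℕ) :
    lap (k + 1) (fun y => (dcorner (k + 1) y : ℝ)) (midpoint ℝ (corner i) (corner j)) = 2 := by
  rw [lap_eq_of_adj_iff
      {midpoint ℝ (corner i) (cornerNbr k j i), midpoint ℝ (corner i) (cornerNbr k j m),
        midpoint ℝ (corner j) (cornerNbr k i j), midpoint ℝ (corner j) (cornerNbr k i m)}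
      (by simp [adj_midpoint_corner_iff hij him hjm])]
  rw [Finset.sum_insert, Finset.sum_insert, Finset.sum_insert, Finset.sum_singleton]
  · rw [dcorner_midpoint_corner hij, dcorner_midpoint_cornerNbr_self hij,
      dcorner_midpoint_cornerNbr_third hij him hjm, dcorner_midpoint_cornerNbr_self hij.symm,
      dcorner_midpoint_cornerNbr_third hij.symm hjm him]
    push_cast [Nat.one_le_two_pow]
    ring
  all_goals
    have : (0:ℝ) < 2⁻¹ ^ k := by positivity
    simp only [Finset.mem_insert, Finset.mem_singleton, not_or]
    and_intros
    all_goals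
      intro h
      have hi := congrArg (β i) h
      have hj := congrArg (β j) h
      simp only [coord_midpoint, coord_cornerNbr, coord_corner, hij, hij.symm, him, hjm,
        if_true, if_false] at hi hj
      linarith

end SierpinskiGasket

open SierpinskiGasket

/-- For every `m ≥ 2`, the side midpoints `p_1=(u_1+u_2)/2`, `p_2=(u_1+u_3)/2`,
`p_3=(u_2+u_3)/2` are non-corner vertices of `SG_m` and `Δ_m d_m(p_i) = 2` for each `i`. -/
theorem lap_dcorner_at_midpoints (m : ℕ) (hm : 2 ≤ m) :
    ((2:ℝ)⁻¹ • (u1 + u2) ∈ V m ∧ (2:ℝ)⁻¹ • (u1 + u2) ∉ corners) ∧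
    ((2:ℝ)⁻¹ • (u1 + u3) ∈ V m ∧ (2:ℝ)⁻¹ • (u1 + u3) ∉ corners) ∧
    ((2:ℝ)⁻¹ • (u2 + u3) ∈ V m ∧ (2:ℝ)⁻¹ • (u2 + u3) ∉ corners) ∧
    lap m (fun y => (dcorner m y : ℝ)) ((2:ℝ)⁻¹ • (u1 + u2)) = 2 ∧
    lap m (fun y => (dcorner m y : ℝ)) ((2:ℝ)⁻¹ • (u1 + u3)) = 2 ∧
    lap m (fun y => (dcorner m y : ℝ)) ((2:ℝ)⁻¹ • (u2 + u3)) = 2 := by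
  obtain ⟨k, rfl⟩ : ∃ k, m = k + 1 := ⟨m - 1, by omega⟩
  have mem (i j : Fin 3) : midpoint ℝ (corner i) (corner j) ∈ V (k + 1) :=
    midpoint_corner_mem_V i (corner_mem_V k j)
  simp only [two_inv_smul_add]
  rw [show u1 = corner 0 from rfl, show u2 = corner 1 from rfl, show u3 = corner 2 from rfl]
  exact ⟨⟨mem 0 1, midpoint_corner_notMem_corners (by decide)⟩,
    ⟨mem 0 2, midpoint_corner_notMem_corners (by decide)⟩,
    ⟨mem 1 2, midpoint_corner_notMem_corners (by decide)⟩,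
    lap_dcorner_midpoint_corner (m := 2) (by decide) (by decide) (by decide) k,
    lap_dcorner_midpoint_corner (m := 1) (by decide) (by decide) (by decide) k,
    lap_dcorner_midpoint_corner (m := 0) (by decide) (by decide) (by decide) k⟩
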